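/- arXiv:1112.6374 — 9 statements merged into one kernel-verified Lean document; each statement's English description precedes it below -/
import Mathlib

section
/- Let X be a normed space, X* its continuous dual, and S* = {f ∈ X* : ‖f‖ = 1} the unit sphere of X*. For a nonempty closed convex set C ⊆ X define δ_C : S* → (−∞,∞] by δ_C(f) = sup f(C). Then for all nonempty closed convex sets A, B ⊆ X one has d_H(A,B) = sup_{f ∈ S*} ρ(δ_A(f), δ_B(f)), where ρ is the extended distance on (−∞,∞] given by ρ(x,y) = |x−y| if x,y are finite, ρ(∞,∞) = 0, and ρ(x,∞) = ρ(∞,x) = ∞ for finite x. In other words, the canonical representation C ↦ δ_C is an isometric embedding of Conv_H(X) into the hypermetric space of (−∞,∞]-valued functions on S* with the sup-distance. -/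
/-- The canonical representation: `δ_C(f) = sup f(C)`, computed in `EReal`
(so that the value `∞` is allowed). -/
noncomputable def deltaSup {X : Type*} [NormedAddCommGroup X] [NormedSpace ℝ X]
    (C : Set X) (f : X →L[ℝ] ℝ) : EReal :=
  ⨆ x ∈ C, (f x : EReal)

/-- The extended distance `ρ` on `(-∞, ∞]`: `ρ(x,y) = |x - y|` for finite `x, y`,
`ρ(∞,∞) = 0` and `ρ(x,∞) = ρ(∞,x) = ∞` for finite `x`. -/
noncomputable def erealRho (x y : EReal) : ENNReal :=
  if x = ⊤ ∧ y = ⊤ then 0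
  else if x ≠ ⊤ ∧ y ≠ ⊤ then ENNReal.ofReal |x.toReal - y.toReal|
  else ⊤

/-!
The inequality `ρ(δ_A f, δ_B f) ≤ d_H(A, B)` for a unit functional `f` comes from
`f a ≤ f b + ‖a - b‖`. Conversely, if `r < dist(a, B)` for some `a ∈ A`, then `a` lies outside
the open convex set `thickening r B`, and a Hahn–Banach functional separating them, normalised to
norm one, satisfies `sup f(B) + r ≤ f a ≤ δ_A f`, so `r ≤ ρ(δ_A f, δ_B f)`.
-/

open Metric

section erealRho

@[simp]
lemma erealRho_coe_coe (s t : ℝ) : erealRho s t = ENNReal.ofReal |s - t| := by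
  simp [erealRho]

@[simp]
lemma erealRho_top_top : erealRho ⊤ ⊤ = 0 := by
  simp [erealRho]

@[simp]
lemma erealRho_top_coe (t : ℝ) : erealRho ⊤ t = ⊤ := by
  simp [erealRho]

lemma erealRho_comm (x y : EReal) : erealRho x y = erealRho y x := by
  unfold erealRho
  rcases eq_or_ne x ⊤ with hx | hx <;> rcases eq_or_ne y ⊤ with hy | hy <;>
    simp [hx, hy, abs_sub_comm]

lemma erealRho_le_ofReal {x y : EReal} {r : ℝ} (hx : x ≠ ⊥) (hy : y ≠ ⊥)
    (hxy : x ≤ y + r) (hyx : y ≤ x + r) : erealRho x y ≤ ENNReal.ofReal r := by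
  induction x using EReal.rec <;> induction y using EReal.rec
  all_goals simp_all [← EReal.coe_add]
  exact ENNReal.ofReal_le_ofReal (abs_sub_le_iff.2 ⟨by linarith, by linarith⟩)

lemma ofReal_sub_le_erealRho {x y : EReal} {s t : ℝ} (hy : y ≠ ⊥) (hyt : y ≤ t) (hsx : s ≤ x) :
    ENNReal.ofReal (s - t) ≤ erealRho x y := by
  induction x using EReal.rec <;> induction y using EReal.rec
  all_goals simp_all
  case coe.coe x y => linarith [le_abs_self (x - y)]

end erealRho

section deltaSup

variable {X : Type*} [NormedAddCommGroup X] [NormedSpace ℝ X]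

lemma le_deltaSup {C : Set X} {x : X} (hx : x ∈ C) (f : X →L[ℝ] ℝ) :
    (f x : EReal) ≤ deltaSup C f :=
  le_iSup₂ (f := fun y (_ : y ∈ C) => (f y : EReal)) x hx

lemma deltaSup_le {C : Set X} {f : X →L[ℝ] ℝ} {c : EReal}
    (h : ∀ x ∈ C, (f x : EReal) ≤ c) : deltaSup C f ≤ c :=
  iSup₂_le h

lemma deltaSup_ne_bot {C : Set X} (hC : C.Nonempty) (f : X →L[ℝ] ℝ) : deltaSup C f ≠ ⊥ := by
  obtain ⟨x, hx⟩ := hC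
  exact ne_bot_of_le_ne_bot (EReal.coe_ne_bot _) (le_deltaSup hx f)

lemma apply_le_add_infDist {B : Set X} (hB : B.Nonempty) {f : X →L[ℝ] ℝ} (hf : ‖f‖ ≤ 1)
    {s : ℝ} (hs : ∀ b ∈ B, f b ≤ s) (x : X) : f x ≤ s + infDist x B := by
  rw [← sub_le_iff_le_add', le_infDist hB]
  intro b hb
  calc f x - s ≤ f x - f b := sub_le_sub_left (hs b hb) _
    _ = f (x - b) := (map_sub f x b).symm
    _ ≤ ‖f (x - b)‖ := le_abs_self _
    _ ≤ 1 * ‖x - b‖ := f.le_of_opNorm_le hf _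
    _ = dist x b := by rw [one_mul, dist_eq_norm]

lemma deltaSup_le_deltaSup_add_hausdorffDist {A B : Set X} (hB : B.Nonempty)
    (hAB : hausdorffEDist A B ≠ ⊤) {f : X →L[ℝ] ℝ} (hf : ‖f‖ ≤ 1) :
    deltaSup A f ≤ deltaSup B f + hausdorffDist A B := by
  induction hδ : deltaSup B f using EReal.rec with
  | bot => exact absurd hδ (deltaSup_ne_bot hB f)
  | top => simp
  | coe s =>
    refine deltaSup_le fun a ha => ?_
    have hs : ∀ b ∈ B, f b ≤ s := fun b hb => EReal.coe_le_coe_iff.1 (hδ ▸ le_deltaSup hb f)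
    exact_mod_cast (apply_le_add_infDist hB hf hs a).trans
      (add_le_add_right (infDist_le_hausdorffDist_of_mem ha hAB) s)

lemma erealRho_deltaSup_le_hausdorffEDist {A B : Set X} (hA : A.Nonempty) (hB : B.Nonempty)
    {f : X →L[ℝ] ℝ} (hf : ‖f‖ ≤ 1) :
    erealRho (deltaSup A f) (deltaSup B f) ≤ hausdorffEDist A B := by
  by_cases hAB : hausdorffEDist A B = ⊤
  · exact hAB ▸ le_top
  have hBA : hausdorffEDist B A ≠ ⊤ := hausdorffEDist_comm (s := A) ▸ hAB
  refine (erealRho_le_ofReal (deltaSup_ne_bot hA f) (deltaSup_ne_bot hB f)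
    (deltaSup_le_deltaSup_add_hausdorffDist hB hAB hf) ?_).trans_eq (ENNReal.ofReal_toReal hAB)
  simpa only [hausdorffDist_comm] using deltaSup_le_deltaSup_add_hausdorffDist hA hBA hf

lemma le_of_forall_mem_ball_apply_le {f : X →L[ℝ] ℝ} (hf : ‖f‖ = 1) {r c : ℝ} (hr : 0 < r)
    (h : ∀ v ∈ ball (0 : X) r, f v ≤ c) : r ≤ c := by
  by_contra! hcr
  obtain ⟨x, hx, hfx⟩ := f.exists_lt_apply_of_lt_opNorm (r := c / r) (by
    rw [hf, div_lt_one hr]; exact hcr)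
  rw [div_lt_iff₀ hr, Real.norm_eq_abs] at hfx
  have hball : ∀ ε : ℝ, |ε| = 1 → (ε * r) • x ∈ ball (0 : X) r := fun ε hε => by
    rw [mem_ball_zero_iff, norm_smul, Real.norm_eq_abs, abs_mul, hε, abs_of_pos hr, one_mul]
    exact mul_lt_of_lt_one_right hr hx
  rcases le_or_gt 0 (f x) with hpos | hneg
  · have := h _ (hball 1 abs_one)
    rw [map_smul, smul_eq_mul, abs_of_nonneg hpos] at *
    linarith
  · have := h _ (hball (-1) (by simp))
    rw [map_smul, smul_eq_mul, abs_of_neg hneg] at *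
    linarith

lemma exists_norm_eq_one_add_le_of_notMem_thickening {B : Set X} (hBco : Convex ℝ B)
    (hBne : B.Nonempty) {r : ℝ} (hr : 0 < r) {a : X} (ha : a ∉ thickening r B) :
    ∃ f : X →L[ℝ] ℝ, ‖f‖ = 1 ∧ ∀ b ∈ B, f b + r ≤ f a := by
  obtain ⟨g, hg⟩ := geometric_hahn_banach_open_point (hBco.thickening r) isOpen_thickening ha
  have hg0 : g ≠ 0 := by
    obtain ⟨b, hb⟩ := hBne
    rintro rfl
    exact (hg b (self_subset_thickening hr B hb)).false
  refine ⟨(‖g‖⁻¹ : ℝ) • g, norm_smul_inv_norm (𝕜 := ℝ) hg0, fun b hb => ?_⟩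
  rw [← le_sub_iff_add_le']
  refine le_of_forall_mem_ball_apply_le (norm_smul_inv_norm (𝕜 := ℝ) hg0) hr fun v hv => ?_
  have hbv : b + v ∈ thickening r B :=
    mem_thickening_iff.2 ⟨b, hb, by simpa [dist_eq_norm] using hv⟩
  have := mul_lt_mul_of_pos_left (hg _ hbv) (inv_pos.2 (norm_pos_iff.2 hg0))
  simp only [smul_apply, smul_eq_mul, map_add, mul_add, RCLike.ofReal_real_eq_id, id] at this ⊢
  linarith

lemma infEDist_le_iSup_erealRho {A B : Set X} (hBne : B.Nonempty) (hBco : Convex ℝ B)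
    {a : X} (ha : a ∈ A) :
    infEDist a B ≤
      ⨆ f : {f : X →L[ℝ] ℝ // ‖f‖ = 1}, erealRho (deltaSup A f.1) (deltaSup B f.1) := by
  refine le_of_forall_lt fun c hc => ?_
  obtain ⟨r, -, hcr, hrB⟩ := ENNReal.lt_iff_exists_real_btwn.1 hc
  have hr : 0 < r := ENNReal.ofReal_pos.1 (hcr.trans_le' bot_le)
  have ha' : a ∉ thickening r B := fun h => (mem_thickening_iff_infEDist_lt.1 h).not_gt hrB
  obtain ⟨f, hf, hfB⟩ := exists_norm_eq_one_add_le_of_notMem_thickening hBco hBne hr ha'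
  have hδB : deltaSup B f ≤ (f a - r : ℝ) :=
    deltaSup_le fun b hb => EReal.coe_le_coe_iff.2 (le_sub_iff_add_le.2 (hfB b hb))
  calc c < ENNReal.ofReal r := hcr
    _ = ENNReal.ofReal (f a - (f a - r)) := by rw [sub_sub_cancel]
    _ ≤ erealRho (deltaSup A f) (deltaSup B f) :=
      ofReal_sub_le_erealRho (deltaSup_ne_bot hBne f) hδB (le_deltaSup ha f)
    _ ≤ _ := le_iSup (fun f : {f : X →L[ℝ] ℝ // ‖f‖ = 1} =>
      erealRho (deltaSup A f.1) (deltaSup B f.1)) ⟨f, hf⟩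

end deltaSup

theorem canonical_representation_isometric_general
    {X : Type*} [NormedAddCommGroup X] [NormedSpace ℝ X]
    (A B : Set X) (hAne : A.Nonempty) (hBne : B.Nonempty)
    (hAco : Convex ℝ A) (hBco : Convex ℝ B) :
    EMetric.hausdorffEdist A B =
      ⨆ f : {f : X →L[ℝ] ℝ // ‖f‖ = 1}, erealRho (deltaSup A f.1) (deltaSup B f.1) := by
  refine le_antisymm (hausdorffEDist_le_of_infEDist
    (fun a ha => infEDist_le_iSup_erealRho hBne hBco ha) fun b hb => ?_)
    (iSup_le fun f => erealRho_deltaSup_le_hausdorffEDist hAne hBne f.2.le)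
  simpa only [erealRho_comm] using infEDist_le_iSup_erealRho hAne hAco hb

/-- The canonical representation `C ↦ δ_C` of the space of nonempty closed convex subsets
of a normed space `X` into the hypermetric space of `(-∞,∞]`-valued functions on the unit
sphere `S*` of the dual space, endowed with the sup-distance, is an isometric embedding:
`d_H(A,B) = sup_{f ∈ S*} ρ(δ_A(f), δ_B(f))`. -/
theorem canonical_representation_isometric
    {X : Type*} [NormedAddCommGroup X] [NormedSpace ℝ X]
    (A B : Set X) (hAne : A.Nonempty) (hBne : B.Nonempty)
    (hAcl : IsClosed A) (hBcl : IsClosed B)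
    (hAco : Convex ℝ A) (hBco : Convex ℝ B) :
    EMetric.hausdorffEdist A B =
      ⨆ f : {f : X →L[ℝ] ℝ // ‖f‖ = 1}, erealRho (deltaSup A f.1) (deltaSup B f.1) :=
  canonical_representation_isometric_general A B hAne hBne hAco hBco
end

section
/- Let C be a nonempty closed convex subset of a normed space X. Then V_C = ⋂_{f ∈ V*_C} f⁻¹((−∞,0]); that is, a vector v ∈ X satisfies c + t v ∈ C for all c ∈ C and all t ≥ 0 if and only if f(v) ≤ 0 for every continuous linear functional f on X with sup f(C) < ∞. -/
/-- For a nonempty closed convex subset `C` of a normed space `X`, the characteristic cone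
`V_C = {v : ∀ c ∈ C, ∀ t ≥ 0, c + t v ∈ C}` equals the intersection
`⋂_{f ∈ V*_C} f⁻¹((-∞,0])`, where `V*_C` is the dual characteristic cone of all continuous
linear functionals bounded above on `C`. -/
theorem characteristicCone_eq_iInter_dual
    {X : Type*} [NormedAddCommGroup X] [NormedSpace ℝ X]
    (C : Set X) (hne : C.Nonempty) (hcl : IsClosed C) (hco : Convex ℝ C) (v : X) :
    (∀ c ∈ C, ∀ t : ℝ, 0 ≤ t → c + t • v ∈ C) ↔
      (∀ f : X →L[ℝ] ℝ, BddAbove (f '' C) → f v ≤ 0) := by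
  constructor
  · intro h f hf
    obtain ⟨c, hc⟩ := hne
    obtain ⟨M, hM⟩ := hf
    by_contra hv
    push_neg at hv
    -- pick t large so f(c + t v) > M
    have key : ∀ t : ℝ, 0 ≤ t → f c + t * f v ≤ M := by
      intro t ht
      have := hM ⟨c + t • v, h c hc t ht, rfl⟩
      simpa [map_add, map_smul, smul_eq_mul] using this
    set t := (|M - f c| + 1) / f v with ht_def
    have htpos : 0 ≤ t := by positivity
    have := key t htpos
    rw [ht_def, div_mul_cancel₀ _ (ne_of_gt hv)] at this
    nlinarith [abs_nonneg (M - f c), le_abs_self (M - f c)]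
  · intro h c hc t ht
    by_contra hx
    obtain ⟨f, u, hfu, hux⟩ := geometric_hahn_banach_closed_point hco hcl hx
    have hbdd : BddAbove (f '' C) := ⟨u, by rintro _ ⟨z, hz, rfl⟩; exact (hfu z hz).le⟩
    have hfv := h f hbdd
    have hfc := hfu c hc
    have : f (c + t • v) = f c + t * f v := by simp [map_add, map_smul, smul_eq_mul]
    nlinarith [mul_nonneg ht (neg_nonneg.mpr hfv)]
end

section
/- Let A, B, C be nonempty closed convex subsets of a normed space X such that V*_B ∪ V*_C ⊆ V*_A (i.e., every continuous linear functional that is bounded above on B or on C is bounded above on A). Then d_H(cl(A+B), cl(A+C)) = d_H(B,C), where cl(A+B) denotes the closure of the pointwise sum A+B. -/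
/-!
Translating by points of `A` gives `d_H(A + B, A + C) ≤ d_H(B, C)`. Conversely, if `b ∈ B` lies
at distance more than `ρ` from `C`, Hahn–Banach separates `b` from the open convex set
`thickening ρ C` by a functional `f` with `σ_C + ρ‖f‖ ≤ f b`, where `σ_S = sup f(S)`. As `f` is
bounded above on `C`, it is bounded above on `A`, so `σ_A` is finite and
`σ_A + f b ≤ σ_{A+C} + δ‖f‖ = σ_A + σ_C + δ‖f‖` whenever `d_H(A + B, A + C) < δ`.
Cancelling `σ_A` gives `ρ ≤ δ`.
-/

open Pointwise

open Metric Set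

section Translation

variable {E : Type*} [SeminormedAddCommGroup E] {A B C : Set E}

theorem Metric.infEDist_add_le_of_mem {a : E} (ha : a ∈ A) (b : E) :
    infEDist (a + b) (A + C) ≤ infEDist b C := by
  rw [← infEDist_vadd a b C]
  exact infEDist_anti (vadd_set_subset_add ha)

theorem Metric.hausdorffEDist_add_add_left_le :
    hausdorffEDist (A + B) (A + C) ≤ hausdorffEDist B C := by
  refine hausdorffEDist_le_of_infEDist ?_ ?_
  · rintro _ ⟨a, ha, b, hb, rfl⟩
    exact (infEDist_add_le_of_mem ha b).trans (infEDist_le_hausdorffEDist_of_mem hb)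
  · rintro _ ⟨a, ha, c, hc, rfl⟩
    rw [hausdorffEDist_comm]
    exact (infEDist_add_le_of_mem ha c).trans (infEDist_le_hausdorffEDist_of_mem hc)

end Translation

section Support

variable {E : Type*} [NormedAddCommGroup E] [NormedSpace ℝ E]

theorem ContinuousLinearMap.mul_norm_le_of_forall_mem_ball {f : E →L[ℝ] ℝ} {ρ M : ℝ}
    (hρ : 0 < ρ) (hf : ∀ y ∈ ball (0 : E) ρ, f y ≤ M) : ρ * ‖f‖ ≤ M := by
  rw [← f.sSup_unit_ball_eq_norm, ← le_div_iff₀' hρ]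
  refine csSup_le ((nonempty_ball.mpr one_pos).image _) ?_
  have hball : ∀ z ∈ ball (0 : E) 1, ρ * f z ≤ M := fun z hz ↦ by
    have hρz : ρ • z ∈ ball (0 : E) ρ := by
      rw [mem_ball_zero_iff, norm_smul, Real.norm_of_nonneg hρ.le]
      exact mul_lt_of_lt_one_right hρ (mem_ball_zero_iff.mp hz)
    simpa only [map_smul, smul_eq_mul] using hf _ hρz
  rintro _ ⟨y, hy, rfl⟩
  have hny : -y ∈ ball (0 : E) 1 := by rwa [mem_ball_zero_iff, norm_neg, ← mem_ball_zero_iff]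
  dsimp only
  rw [Real.norm_eq_abs, abs_le', le_div_iff₀' hρ, le_div_iff₀' hρ]
  exact ⟨hball y hy, by simpa only [map_neg, mul_neg] using hball (-y) hny⟩

theorem exists_dual_add_mul_norm_le_of_notMem_thickening {C : Set E} {b : E} {ρ : ℝ}
    (hCco : Convex ℝ C) (hCne : C.Nonempty) (hρ : 0 < ρ) (hb : b ∉ thickening ρ C) :
    ∃ f : E →L[ℝ] ℝ, f ≠ 0 ∧ ∀ x ∈ C, f x + ρ * ‖f‖ ≤ f b := by
  obtain ⟨f, hf⟩ := geometric_hahn_banach_open_point (hCco.thickening ρ) isOpen_thickening hb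
  have hfC : ∀ x ∈ C, ∀ y ∈ ball (0 : E) ρ, f x + f y < f b := fun x hx y hy ↦
    map_add f x y ▸ hf _ (add_ball_zero ρ C ▸ add_mem_add hx hy)
  obtain ⟨x₀, hx₀⟩ := hCne
  refine ⟨f, ?_, fun x hx ↦ ?_⟩
  · rintro rfl
    simpa using hfC x₀ hx₀ 0 (mem_ball_self hρ)
  · have := f.mul_norm_le_of_forall_mem_ball hρ fun y hy ↦
      le_sub_iff_add_le'.mpr (hfC x hx y hy).le
    linarith

theorem ContinuousLinearMap.apply_le_csSup_add_of_infEDist_lt (f : E →L[ℝ] ℝ) {S : Set E}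
    (hS : BddAbove (f '' S)) {p : E} {δ : ℝ} (hp : infEDist p S < ENNReal.ofReal δ) :
    f p ≤ sSup (f '' S) + ‖f‖ * δ := by
  obtain ⟨s, hs, hps⟩ := infEDist_lt_iff.mp hp
  have hdist : dist p s < δ := edist_lt_ofReal.mp hps
  calc f p = f s + f (p - s) := by rw [map_sub]; ring
    _ ≤ sSup (f '' S) + ‖f‖ * δ := by
      gcongr
      · exact le_csSup hS (mem_image_of_mem f hs)
      · calc f (p - s) ≤ ‖f (p - s)‖ := le_abs_self _
          _ ≤ ‖f‖ * ‖p - s‖ := f.le_opNorm _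
          _ ≤ ‖f‖ * δ := by rw [← dist_eq_norm]; gcongr

theorem ContinuousLinearMap.csSup_image_add (f : E →L[ℝ] ℝ) {S T : Set E}
    (hS : S.Nonempty) (hT : T.Nonempty) (hSb : BddAbove (f '' S)) (hTb : BddAbove (f '' T)) :
    sSup (f '' (S + T)) = sSup (f '' S) + sSup (f '' T) := by
  rw [image_add, csSup_add (hS.image f) hSb (hT.image f) hTb]

end Support

section Cancellation

variable {E : Type*} [NormedAddCommGroup E] [NormedSpace ℝ E] {A B C : Set E}

theorem le_of_hausdorffEDist_add_add_left_lt_ofReal (hAne : A.Nonempty) (hCne : C.Nonempty)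
    (hCco : Convex ℝ C) (hAC : ∀ f : E →L[ℝ] ℝ, BddAbove (f '' C) → BddAbove (f '' A))
    {b : E} (hb : b ∈ B) {ρ δ : ℝ} (hρ : 0 < ρ) (hbC : b ∉ thickening ρ C)
    (hδ : hausdorffEDist (A + B) (A + C) < ENNReal.ofReal δ) : ρ ≤ δ := by
  obtain ⟨f, hf0, hfC⟩ := exists_dual_add_mul_norm_le_of_notMem_thickening hCco hCne hρ hbC
  have hCbdd : BddAbove (f '' C) :=
    ⟨f b - ρ * ‖f‖, forall_mem_image.mpr fun x hx ↦ le_sub_iff_add_le.mpr (hfC x hx)⟩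
  have hAbdd := hAC f hCbdd
  have hACbdd : BddAbove (f '' (A + C)) := image_add f ▸ hAbdd.add hCbdd
  have hAB : ∀ a ∈ A, f a + f b ≤ sSup (f '' A) + sSup (f '' C) + ‖f‖ * δ := fun a ha ↦ by
    have := f.apply_le_csSup_add_of_infEDist_lt hACbdd
      ((infEDist_le_hausdorffEDist_of_mem (add_mem_add ha hb)).trans_lt hδ)
    rwa [map_add, f.csSup_image_add hAne hCne hAbdd hCbdd] at this
  have hA : sSup (f '' A) + f b ≤ sSup (f '' A) + sSup (f '' C) + ‖f‖ * δ :=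
    le_sub_iff_add_le.mp <| csSup_le (hAne.image f) <|
      forall_mem_image.mpr fun a ha ↦ le_sub_iff_add_le.mpr (hAB a ha)
  have hC : sSup (f '' C) + ρ * ‖f‖ ≤ f b :=
    le_sub_iff_add_le.mp <| csSup_le (hCne.image f) <|
      forall_mem_image.mpr fun x hx ↦ le_sub_iff_add_le.mpr (hfC x hx)
  have hρδ : ρ * ‖f‖ ≤ δ * ‖f‖ := by linarith
  exact le_of_mul_le_mul_right hρδ (norm_pos_iff.mpr hf0)

theorem infEDist_le_hausdorffEDist_add_add_left (hAne : A.Nonempty) (hCne : C.Nonempty)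
    (hCco : Convex ℝ C) (hAC : ∀ f : E →L[ℝ] ℝ, BddAbove (f '' C) → BddAbove (f '' A))
    {b : E} (hb : b ∈ B) : infEDist b C ≤ hausdorffEDist (A + B) (A + C) := by
  by_contra! hlt
  obtain ⟨δ, hδ0, hδ, hδb⟩ := ENNReal.lt_iff_exists_real_btwn.mp hlt
  obtain ⟨ρ, -, hδρ, hρb⟩ := ENNReal.lt_iff_exists_real_btwn.mp hδb
  have hδρ : δ < ρ := (ENNReal.ofReal_lt_ofReal_iff'.mp hδρ).1
  have hbC : b ∉ thickening ρ C := fun h ↦ (mem_thickening_iff_infEDist_lt.mp h).not_gt hρb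
  exact hδρ.not_ge <|
    le_of_hausdorffEDist_add_add_left_lt_ofReal hAne hCne hCco hAC hb (hδ0.trans_lt hδρ) hbC hδ

end Cancellation

theorem hausdorffEdist_add_cancel_general
    {X : Type*} [NormedAddCommGroup X] [NormedSpace ℝ X]
    (A B C : Set X)
    (hAne : A.Nonempty) (hBne : B.Nonempty) (hCne : C.Nonempty)
    (hBco : Convex ℝ B) (hCco : Convex ℝ C)
    (h : ∀ f : X →L[ℝ] ℝ, BddAbove (f '' B) ∨ BddAbove (f '' C) → BddAbove (f '' A)) :
    EMetric.hausdorffEdist (closure (A + B)) (closure (A + C)) =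
      EMetric.hausdorffEdist B C := by
  show hausdorffEDist _ _ = hausdorffEDist _ _
  rw [hausdorffEDist_closure]
  refine le_antisymm hausdorffEDist_add_add_left_le (hausdorffEDist_le_of_infEDist ?_ ?_)
  · exact fun b hb ↦
      infEDist_le_hausdorffEDist_add_add_left hAne hCne hCco (fun f hf ↦ h f (.inr hf)) hb
  · intro c hc
    rw [hausdorffEDist_comm]
    exact infEDist_le_hausdorffEDist_add_add_left hAne hBne hBco (fun f hf ↦ h f (.inl hf)) hc

/-- If `A, B, C` are nonempty closed convex subsets of a normed space such that every
continuous linear functional bounded above on `B` or on `C` is bounded above on `A`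
(i.e. `V*_B ∪ V*_C ⊆ V*_A`), then `d_H(cl(A+B), cl(A+C)) = d_H(B, C)`. -/
theorem hausdorffEdist_add_cancel
    {X : Type*} [NormedAddCommGroup X] [NormedSpace ℝ X]
    (A B C : Set X)
    (hAne : A.Nonempty) (hBne : B.Nonempty) (hCne : C.Nonempty)
    (hAcl : IsClosed A) (hBcl : IsClosed B) (hCcl : IsClosed C)
    (hAco : Convex ℝ A) (hBco : Convex ℝ B) (hCco : Convex ℝ C)
    (h : ∀ f : X →L[ℝ] ℝ, BddAbove (f '' B) ∨ BddAbove (f '' C) → BddAbove (f '' A)) :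
    EMetric.hausdorffEdist (closure (A + B)) (closure (A + C)) =
      EMetric.hausdorffEdist B C :=
  hausdorffEdist_add_cancel_general A B C hAne hBne hCne hBco hCco h
end

section
/- Let A, B, A', B' be nonempty closed convex subsets of a normed space X. Then d_H(cconv(A∪B), cconv(A'∪B')) ≤ max{d_H(A,A'), d_H(B,B')}, where cconv denotes the closed convex hull. -/
/-!
The `r`-neighbourhood of a convex set is convex, so once every point of `s` lies within `r` of
`convexHull ℝ t`, so does every point of `convexHull ℝ s`. Hence taking convex hulls does not
increase the Hausdorff distance; neither does taking closures or unions.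
-/

section

open Metric

variable {E : Type*} [NormedAddCommGroup E] [NormedSpace ℝ E]

theorem infEDist_convexHull_le_hausdorffEDist {s t : Set E} {x : E} (hx : x ∈ convexHull ℝ s) :
    infEDist x (convexHull ℝ t) ≤ hausdorffEDist s t := by
  rcases eq_or_ne (hausdorffEDist s t) ⊤ with htop | htop
  · exact htop ▸ le_top
  rw [← ENNReal.ofReal_toReal htop, ← mem_cthickening_iff]
  refine convexHull_min (fun y hy => ?_) ((convex_convexHull ℝ t).cthickening _) hx
  rw [mem_cthickening_iff, ENNReal.ofReal_toReal htop]
  exact (infEDist_anti (subset_convexHull ℝ t)).trans (infEDist_le_hausdorffEDist_of_mem hy)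

theorem hausdorffEDist_convexHull_le (s t : Set E) :
    hausdorffEDist (convexHull ℝ s) (convexHull ℝ t) ≤ hausdorffEDist s t :=
  hausdorffEDist_le_of_infEDist (fun _ hx => infEDist_convexHull_le_hausdorffEDist hx)
    fun _ hx => hausdorffEDist_comm (s := s) ▸ infEDist_convexHull_le_hausdorffEDist hx

end

theorem hausdorffEdist_cconv_union_le_general
    {X : Type*} [NormedAddCommGroup X] [NormedSpace ℝ X]
    (A B A' B' : Set X) :
    EMetric.hausdorffEdist (closure (convexHull ℝ (A ∪ B)))
        (closure (convexHull ℝ (A' ∪ B'))) ≤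
      max (EMetric.hausdorffEdist A A') (EMetric.hausdorffEdist B B') :=
  calc Metric.hausdorffEDist (closure (convexHull ℝ (A ∪ B))) (closure (convexHull ℝ (A' ∪ B')))
      = Metric.hausdorffEDist (convexHull ℝ (A ∪ B)) (convexHull ℝ (A' ∪ B')) :=
        Metric.hausdorffEDist_closure
    _ ≤ Metric.hausdorffEDist (A ∪ B) (A' ∪ B') := hausdorffEDist_convexHull_le _ _
    _ ≤ max (Metric.hausdorffEDist A A') (Metric.hausdorffEDist B B') :=
      Metric.hausdorffEDist_union_le

/-- For nonempty closed convex subsets `A, B, A', B'` of a normed space,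
`d_H(cconv(A ∪ B), cconv(A' ∪ B')) ≤ max (d_H(A,A')) (d_H(B,B'))`, where `cconv` denotes
the closed convex hull. -/
theorem hausdorffEdist_cconv_union_le
    {X : Type*} [NormedAddCommGroup X] [NormedSpace ℝ X]
    (A B A' B' : Set X)
    (hAne : A.Nonempty) (hBne : B.Nonempty) (hA'ne : A'.Nonempty) (hB'ne : B'.Nonempty)
    (hAcl : IsClosed A) (hBcl : IsClosed B) (hA'cl : IsClosed A') (hB'cl : IsClosed B')
    (hAco : Convex ℝ A) (hBco : Convex ℝ B) (hA'co : Convex ℝ A') (hB'co : Convex ℝ B') :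
    EMetric.hausdorffEdist (closure (convexHull ℝ (A ∪ B)))
        (closure (convexHull ℝ (A' ∪ B'))) ≤
      max (EMetric.hausdorffEdist A A') (EMetric.hausdorffEdist B B') :=
  hausdorffEdist_cconv_union_le_general A B A' B'
end

section
/- Let Z be a closed linear subspace of a normed space X, let q : X → X/Z be the quotient map onto the quotient normed space, and let A, B be nonempty closed convex subsets of X with Z ⊆ V_A ∩ V_B. Then the images q(A) and q(B) are closed convex subsets of X/Z and d_H(q(A), q(B)) = d_H(A, B), where on the left d_H is the Hausdorff extended metric of the quotient norm on X/Z. -/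
/-!
Translation by `Z` (the case `t = 1` of `Z ⊆ V_A ∩ V_B`) leaves `A` and `B` invariant. A set `S`
with `S + Z ⊆ S` is the full preimage of its image under `q`, so that image is closed when `S` is;
and since `‖q (x - y)‖ = inf_{z ∈ Z} ‖x - y - z‖`, the distance from `q x` to `q(S)` is
`inf_{y ∈ S, z ∈ Z} ‖x - (y + z)‖ = dist(x, S)`. The Hausdorff distance is built from these
point-to-set distances.
-/

open Metric Set

namespace Submodule

variable {R X : Type*} [Ring R] [SeminormedAddCommGroup X] [Module R X] (Z : Submodule R X)
  {S T : Set X}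

theorem edist_mkQ (x y : X) : edist (Z.mkQ x) (Z.mkQ y) = infEDist (x - y) Z := by
  rw [edist_dist, dist_eq_norm, ← map_sub, mkQ_apply,
    ← ENNReal.ofReal_toReal (infEDist_ne_top ⟨0, Z.zero_mem⟩)]
  exact congrArg ENNReal.ofReal (QuotientAddGroup.norm_mk (S := Z.toAddSubgroup) (x - y))

theorem preimage_mkQ_image_of_add_mem (hS : ∀ s ∈ S, ∀ z ∈ Z, s + z ∈ S) :
    Z.mkQ ⁻¹' (Z.mkQ '' S) = S := by
  refine subset_antisymm ?_ (subset_preimage_image _ _)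
  rintro x ⟨s, hs, hsx⟩
  have hxs : x - s ∈ Z := (Quotient.eq Z).1 hsx.symm
  simpa using hS s hs _ hxs

theorem isClosed_mkQ_image_of_add_mem (hS : ∀ s ∈ S, ∀ z ∈ Z, s + z ∈ S) (hSc : IsClosed S) :
    IsClosed (Z.mkQ '' S) := by
  rwa [← Z.isQuotientMap_mkQ.isClosed_preimage, Z.preimage_mkQ_image_of_add_mem hS]

theorem infEDist_mkQ_image_of_add_mem (hS : ∀ s ∈ S, ∀ z ∈ Z, s + z ∈ S) (x : X) :
    infEDist (Z.mkQ x) (Z.mkQ '' S) = infEDist x S := by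
  refine le_antisymm (le_infEDist.2 fun y hy => ?_) (le_infEDist.2 ?_)
  · calc infEDist (Z.mkQ x) (Z.mkQ '' S) ≤ edist (Z.mkQ x) (Z.mkQ y) :=
          infEDist_le_edist_of_mem (mem_image_of_mem _ hy)
      _ ≤ edist (x - y) 0 := Z.edist_mkQ x y ▸ infEDist_le_edist_of_mem Z.zero_mem
      _ = edist x y := by rw [edist_zero_right, edist_eq_enorm_sub]
  · rintro _ ⟨y, hy, rfl⟩
    rw [edist_mkQ]
    refine le_infEDist.2 fun z hz => ?_
    calc infEDist x S ≤ edist x (y + z) := infEDist_le_edist_of_mem (hS y hy z hz)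
      _ = edist (x - y) z := by rw [edist_eq_enorm_sub, edist_eq_enorm_sub, sub_sub]

theorem hausdorffEDist_mkQ_image_of_add_mem (hS : ∀ s ∈ S, ∀ z ∈ Z, s + z ∈ S)
    (hT : ∀ t ∈ T, ∀ z ∈ Z, t + z ∈ T) :
    hausdorffEDist (Z.mkQ '' S) (Z.mkQ '' T) = hausdorffEDist S T := by
  simp only [hausdorffEDist_def, iSup_image, Z.infEDist_mkQ_image_of_add_mem hS,
    Z.infEDist_mkQ_image_of_add_mem hT]

end Submodule

theorem hausdorffEdist_quotient_general
    {X : Type*} [NormedAddCommGroup X] [NormedSpace ℝ X]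
    (Z : Submodule ℝ X)
    (A B : Set X)
    (hAcl : IsClosed A) (hBcl : IsClosed B)
    (hAco : Convex ℝ A) (hBco : Convex ℝ B)
    (hZA : ∀ z ∈ Z, ∀ c ∈ A, ∀ t : ℝ, 0 ≤ t → c + t • z ∈ A)
    (hZB : ∀ z ∈ Z, ∀ c ∈ B, ∀ t : ℝ, 0 ≤ t → c + t • z ∈ B) :
    IsClosed (Z.mkQ '' A) ∧ Convex ℝ (Z.mkQ '' A) ∧
      IsClosed (Z.mkQ '' B) ∧ Convex ℝ (Z.mkQ '' B) ∧
      EMetric.hausdorffEdist (Z.mkQ '' A) (Z.mkQ '' B) = EMetric.hausdorffEdist A B := by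
  have hA : ∀ a ∈ A, ∀ z ∈ Z, a + z ∈ A := fun a ha z hz => by
    simpa using hZA z hz a ha 1 zero_le_one
  have hB : ∀ b ∈ B, ∀ z ∈ Z, b + z ∈ B := fun b hb z hz => by
    simpa using hZB z hz b hb 1 zero_le_one
  exact ⟨Z.isClosed_mkQ_image_of_add_mem hA hAcl, hAco.linear_image Z.mkQ,
    Z.isClosed_mkQ_image_of_add_mem hB hBcl, hBco.linear_image Z.mkQ,
    Z.hausdorffEDist_mkQ_image_of_add_mem hA hB⟩

/-- Let `Z` be a closed linear subspace of a normed space `X` and `A, B` nonempty closed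
convex subsets of `X` with `Z ⊆ V_A ∩ V_B` (where `V_C` is the characteristic cone of `C`).
Then the images `q(A)`, `q(B)` under the quotient map `q : X → X/Z` are closed convex subsets
of the quotient normed space `X/Z`, and `d_H(q(A), q(B)) = d_H(A, B)`. -/
theorem hausdorffEdist_quotient
    {X : Type*} [NormedAddCommGroup X] [NormedSpace ℝ X]
    (Z : Submodule ℝ X) (hZ : IsClosed (Z : Set X))
    (A B : Set X) (hAne : A.Nonempty) (hBne : B.Nonempty)
    (hAcl : IsClosed A) (hBcl : IsClosed B)
    (hAco : Convex ℝ A) (hBco : Convex ℝ B)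
    (hZA : ∀ z ∈ Z, ∀ c ∈ A, ∀ t : ℝ, 0 ≤ t → c + t • z ∈ A)
    (hZB : ∀ z ∈ Z, ∀ c ∈ B, ∀ t : ℝ, 0 ≤ t → c + t • z ∈ B) :
    IsClosed (Z.mkQ '' A) ∧ Convex ℝ (Z.mkQ '' A) ∧
      IsClosed (Z.mkQ '' B) ∧ Convex ℝ (Z.mkQ '' B) ∧
      EMetric.hausdorffEdist (Z.mkQ '' A) (Z.mkQ '' B) = EMetric.hausdorffEdist A B :=
  hausdorffEdist_quotient_general Z A B hAcl hBcl hAco hBco hZA hZB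
end

section
/- Let X be a normed space, let C₀ be a nonempty closed convex subset of X, let H = {C ∈ Conv_H(X) : d_H(C, C₀) < ∞} be the metric component of C₀, and let Z be a closed linear subspace of X with Z ⊆ V_{C₀}. Let q : X → X/Z be the quotient map. Then the map C ↦ q(C) is a bijective isometry from H onto the metric component {D ∈ Conv_H(X/Z) : d_H(D, q(C₀)) < ∞} of q(C₀) in Conv_H(X/Z). -/
/-!
A member `C` of the metric component of `C₀` is invariant under translation by `Z`: for `z ∈ Z`
the ray `c₀ + ℝ≥0 z ⊆ C₀` stays within bounded distance of `C`, so `z` lies in the asymptotic cone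
of `C`, and a closed convex set contains every ray from its points in an asymptotic direction.
For `Z`-invariant sets `q⁻¹(q C) = C`, and `infEDist x (q⁻¹ D) = infEDist (q x) D` because the
quotient norm is a distance to a coset. Hence `D ↦ q⁻¹ D` inverts `C ↦ q C`, and both preserve
Hausdorff distances.
-/

open Filter Metric Set Topology

section AsymptoticCone

variable {E : Type*} [SeminormedAddCommGroup E] [NormedSpace ℝ E]

theorem mem_asymptoticCone_of_forall_exists_dist_le {s : Set E} {p v : E} {R : ℝ}
    (h : ∀ t : ℝ, 0 ≤ t → ∃ x ∈ s, dist (p + t • v) x ≤ R) : v ∈ asymptoticCone ℝ s := by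
  choose! x hxs hx using h
  have hlim : Tendsto (fun t : ℝ => t⁻¹ • x t) atTop (𝓝 v) := by
    rw [tendsto_iff_dist_tendsto_zero]
    refine squeeze_zero' (Eventually.of_forall fun _ => dist_nonneg) ?_
      (by simpa using tendsto_inv_atTop_zero.const_mul (R + ‖p‖))
    filter_upwards [eventually_gt_atTop 0] with t ht
    have hx' : dist (x t) (p + t • v) ≤ R := dist_comm (x t) _ ▸ hx t ht.le
    calc dist (t⁻¹ • x t) v = t⁻¹ * ‖x t - (p + t • v) + p‖ := by
          rw [dist_eq_norm, ← norm_smul_of_nonneg (inv_nonneg.2 ht.le)]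
          congr 1
          rw [smul_add, smul_sub, smul_add, smul_smul, inv_mul_cancel₀ ht.ne', one_smul]
          abel
      _ ≤ t⁻¹ * (R + ‖p‖) := by
          gcongr
          exact (norm_add_le _ _).trans (by rw [← dist_eq_norm]; gcongr)
      _ = (R + ‖p‖) * t⁻¹ := mul_comm _ _
  refine (tendsto_id.atTop_smul_nhds_tendsto_asymptoticNhds hlim).frequently
    (Eventually.frequently ?_)
  filter_upwards [eventually_gt_atTop 0] with t ht
  simpa only [id, smul_inv_smul₀ ht.ne'] using hxs t ht.le

theorem Convex.add_mem_of_hausdorffEDist_ne_top {C C₀ : Set E} (hC : Convex ℝ C)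
    (hCc : IsClosed C) (hfin : hausdorffEDist C C₀ ≠ ⊤) {v : E}
    (hv : ∀ c ∈ C₀, ∀ t : ℝ, 0 ≤ t → c + t • v ∈ C₀) {c : E} (hc : c ∈ C) : c + v ∈ C := by
  obtain ⟨c₀, hc₀, -⟩ := exists_dist_lt_of_hausdorffDist_lt hc
    (lt_add_one (hausdorffDist C C₀)) hfin
  have hv' : v ∈ asymptoticCone ℝ C :=
    mem_asymptoticCone_of_forall_exists_dist_le fun t ht =>
      let ⟨x, hx, hd⟩ := exists_dist_lt_of_hausdorffDist_lt' (hv c₀ hc₀ t ht)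
        (lt_add_one (hausdorffDist C C₀)) hfin
      ⟨x, hx, (dist_comm _ _).trans_le hd.le⟩
  simpa only [one_smul, vadd_eq_add, add_comm] using
    hC.smul_vadd_mem_of_isClosed_of_mem_asymptoticCone hCc zero_le_one hv' hc

end AsymptoticCone

namespace Submodule

variable {X : Type*} [SeminormedAddCommGroup X] [NormedSpace ℝ X] (Z : Submodule ℝ X)

theorem edist_mkQ_le (x y : X) : edist (Z.mkQ x) (Z.mkQ y) ≤ edist x y := by
  rw [edist_dist, edist_dist, dist_eq_norm, dist_eq_norm, ← map_sub]
  exact ENNReal.ofReal_le_ofReal (Quotient.norm_mk_le Z (x - y))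

theorem infEDist_preimage_mkQ (x : X) (D : Set (X ⧸ Z)) :
    infEDist x (Z.mkQ ⁻¹' D) = infEDist (Z.mkQ x) D := by
  refine le_antisymm (le_infEDist.2 fun d hd => ?_) (le_infEDist.2 fun b hb =>
    (infEDist_le_edist_of_mem (s := D) hb).trans (Z.edist_mkQ_le x b))
  obtain ⟨b, rfl⟩ := Z.mkQ_surjective d
  refine le_of_forall_gt fun r hr => ?_
  obtain ⟨r', -, hr', hr'r⟩ := ENNReal.lt_iff_exists_real_btwn.1 hr
  have hbx : ‖Z.mkQ (b - x)‖ < r' := by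
    rwa [map_sub, ← dist_eq_norm, dist_comm, ← edist_lt_ofReal]
  obtain ⟨m, hm, hmr⟩ := Quotient.norm_mk_lt (Z.mkQ (b - x)) (sub_pos.2 hbx)
  have hxm : x + m ∈ Z.mkQ ⁻¹' D := by
    rwa [mem_preimage, map_add, mkQ_apply Z m, hm, ← map_add, add_sub_cancel]
  calc infEDist x (Z.mkQ ⁻¹' D) ≤ edist x (x + m) := infEDist_le_edist_of_mem hxm
    _ < ENNReal.ofReal r' := by
      rw [edist_lt_ofReal, dist_self_add_right]
      linarith
    _ < r := hr'r

theorem hausdorffEDist_preimage_mkQ (D D' : Set (X ⧸ Z)) :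
    hausdorffEDist (Z.mkQ ⁻¹' D) (Z.mkQ ⁻¹' D') = hausdorffEDist D D' := by
  simp only [hausdorffEDist_def, infEDist_preimage_mkQ]
  rw [← iSup_image (g := (infEDist · D')), ← iSup_image (g := (infEDist · D)),
    image_preimage_eq D Z.mkQ_surjective, image_preimage_eq D' Z.mkQ_surjective]

theorem preimage_mkQ_image_mkQ {C : Set X} (hC : ∀ c ∈ C, ∀ z ∈ Z, c + z ∈ C) :
    Z.mkQ ⁻¹' (Z.mkQ '' C) = C := by
  refine (subset_preimage_image _ _).antisymm' ?_
  rintro x ⟨c, hc, hcx⟩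
  simpa using hC c hc (x - c) ((Quotient.eq Z).1 hcx.symm)

theorem hausdorffEDist_image_mkQ {C C' : Set X} (hC : ∀ c ∈ C, ∀ z ∈ Z, c + z ∈ C)
    (hC' : ∀ c ∈ C', ∀ z ∈ Z, c + z ∈ C') :
    hausdorffEDist (Z.mkQ '' C) (Z.mkQ '' C') = hausdorffEDist C C' := by
  rw [← hausdorffEDist_preimage_mkQ, Z.preimage_mkQ_image_mkQ hC, Z.preimage_mkQ_image_mkQ hC']

theorem isClosed_image_mkQ_iff {C : Set X} (hC : ∀ c ∈ C, ∀ z ∈ Z, c + z ∈ C) :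
    IsClosed (Z.mkQ '' C) ↔ IsClosed C := by
  rw [← Z.isQuotientMap_mkQL.isClosed_preimage, coe_mkQL, Z.preimage_mkQ_image_mkQ hC]

end Submodule

theorem quotient_isometry_of_metric_components_general
    {X : Type*} [NormedAddCommGroup X] [NormedSpace ℝ X]
    (Z : Submodule ℝ X)
    (C₀ : Set X)
    (hZC : ∀ z ∈ Z, ∀ c ∈ C₀, ∀ t : ℝ, 0 ≤ t → c + t • z ∈ C₀) :
    ∃ Φ : {C : Set X // C.Nonempty ∧ IsClosed C ∧ Convex ℝ C ∧
            EMetric.hausdorffEdist C C₀ < ⊤} →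
          {D : Set (X ⧸ Z) // D.Nonempty ∧ IsClosed D ∧ Convex ℝ D ∧
            EMetric.hausdorffEdist D (Z.mkQ '' C₀) < ⊤},
      Function.Bijective Φ ∧
      (∀ C, (Φ C : Set (X ⧸ Z))  = Z.mkQ '' (C : Set X)) ∧
      (∀ C C', EMetric.hausdorffEdist (Φ C : Set (X ⧸ Z)) (Φ C' : Set (X ⧸ Z)) =
        EMetric.hausdorffEdist (C : Set X) (C' : Set X)) := by
  have hsat₀ : ∀ c ∈ C₀, ∀ z ∈ Z, c + z ∈ C₀ := fun c hc z hz => by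
    simpa using hZC z hz c hc 1 zero_le_one
  have hsat : ∀ C : {C : Set X // C.Nonempty ∧ IsClosed C ∧ Convex ℝ C ∧
      EMetric.hausdorffEdist C C₀ < ⊤}, ∀ c ∈ (C : Set X), ∀ z ∈ Z, c + z ∈ (C : Set X) :=
    fun ⟨_, _, hCc, hC, hfin⟩ _ hc z hz =>
      hC.add_mem_of_hausdorffEDist_ne_top hCc hfin.ne (hZC z hz) hc
  refine ⟨fun C => ⟨Z.mkQ '' C, C.2.1.image _, (Z.isClosed_image_mkQ_iff (hsat C)).2 C.2.2.1,
      C.2.2.2.1.linear_image Z.mkQ, ?_⟩, ⟨fun C C' h => ?_, fun D => ?_⟩, fun _ => rfl,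
      fun C C' => Z.hausdorffEDist_image_mkQ (hsat C) (hsat C')⟩
  · exact (Z.hausdorffEDist_image_mkQ (hsat C) hsat₀).trans_lt C.2.2.2.2
  · rw [Subtype.ext_iff, ← Z.preimage_mkQ_image_mkQ (hsat C), ← Z.preimage_mkQ_image_mkQ (hsat C')]
    exact congrArg (Z.mkQ ⁻¹' ·) (congrArg Subtype.val h)
  · obtain ⟨D, hDne, hDc, hD, hfin⟩ := D
    refine ⟨⟨Z.mkQ ⁻¹' D, hDne.preimage Z.mkQ_surjective, hDc.preimage Z.mkQL.continuous,
      hD.linear_preimage Z.mkQ, ?_⟩, Subtype.ext (image_preimage_eq D Z.mkQ_surjective)⟩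
    rw [← Z.preimage_mkQ_image_mkQ hsat₀]
    exact (Z.hausdorffEDist_preimage_mkQ _ _).trans_lt hfin

/-- Let `Z` be a closed linear subspace of a normed space `X` contained in the characteristic
cone `V_{C₀}` of a nonempty closed convex set `C₀ ⊆ X`, and let `q : X → X/Z` be the quotient
map. Then `C ↦ q(C)` is a bijective isometry from the metric component
`H = {C : d_H(C, C₀) < ∞}` of `C₀` in `Conv_H(X)` onto the metric component of `q(C₀)` in
`Conv_H(X/Z)`. -/
theorem quotient_isometry_of_metric_components
    {X : Type*} [NormedAddCommGroup X] [NormedSpace ℝ X]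
    (Z : Submodule ℝ X) (hZ : IsClosed (Z : Set X))
    (C₀ : Set X) (hne : C₀.Nonempty) (hcl : IsClosed C₀) (hco : Convex ℝ C₀)
    (hZC : ∀ z ∈ Z, ∀ c ∈ C₀, ∀ t : ℝ, 0 ≤ t → c + t • z ∈ C₀) :
    ∃ Φ : {C : Set X // C.Nonempty ∧ IsClosed C ∧ Convex ℝ C ∧
            EMetric.hausdorffEdist C C₀ < ⊤} →
          {D : Set (X ⧸ Z) // D.Nonempty ∧ IsClosed D ∧ Convex ℝ D ∧
            EMetric.hausdorffEdist D (Z.mkQ '' C₀) < ⊤},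
      Function.Bijective Φ ∧
      (∀ C, (Φ C : Set (X ⧸ Z))  = Z.mkQ '' (C : Set X)) ∧
      (∀ C C', EMetric.hausdorffEdist (Φ C : Set (X ⧸ Z)) (Φ C' : Set (X ⧸ Z)) =
        EMetric.hausdorffEdist (C : Set X) (C' : Set X)) :=
  quotient_isometry_of_metric_components_general Z C₀ hZC
end

section
/- Let X be a normed space, let L > 0, and let {(x_i, f_i)}_{i∈I} be a family of pairs in X × X* which is biorthogonal, i.e., f_i(x_i) = 1 and f_i(x_j) = 0 for all distinct i, j ∈ I, and satisfies ‖f_i‖ ≤ L for all i ∈ I. For a nonempty subset A ⊆ I let C_A = cconv{x_i : i ∈ A} be the closed convex hull of {x_i : i ∈ A}. Then for any two distinct nonempty subsets A, B ⊆ I one has d_H(C_A, C_B) ≥ 1/L. -/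
/-! If `i ∈ A \ B`, then `f i` vanishes on the closed convex set `C_B` but takes the value `1`
at `x i ∈ C_A`; since `‖f i‖ ≤ L`, the point `x i` is at distance at least `1 / L` from `C_B`. -/

open Metric

section KernelDistance

variable {E : Type*} [SeminormedAddCommGroup E] [NormedSpace ℝ E]

theorem closure_convexHull_subset_ker {s : Set E} (φ : E →L[ℝ] ℝ)
    (hs : s ⊆ (φ.ker : Set E)) : closure (convexHull ℝ s) ⊆ (φ.ker : Set E) := by
  rw [← closedConvexHull_eq_closure_convexHull]
  exact closedConvexHull_min hs φ.ker.convex φ.isClosed_ker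

theorem ofReal_abs_div_le_infEDist_of_subset_ker {s : Set E} (φ : E →L[ℝ] ℝ) {L : ℝ}
    (hL : 0 < L) (hφ : ‖φ‖ ≤ L) (z : E) (hs : s ⊆ (φ.ker : Set E)) :
    ENNReal.ofReal (|φ z| / L) ≤ infEDist z s := by
  refine le_infEDist.2 fun y hy => ?_
  have hφy : φ y = 0 := hs hy
  rw [edist_dist]
  refine ENNReal.ofReal_le_ofReal ((div_le_iff₀ hL).2 ?_)
  calc |φ z| = ‖φ (z - y)‖ := by rw [map_sub, hφy, sub_zero, Real.norm_eq_abs]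
    _ ≤ ‖φ‖ * ‖z - y‖ := φ.le_opNorm _
    _ ≤ L * ‖z - y‖ := by gcongr
    _ = dist z y * L := by rw [dist_eq_norm, mul_comm]

end KernelDistance

theorem ofReal_one_div_le_hausdorffEDist_of_mem_of_notMem
    {X : Type*} [NormedAddCommGroup X] [NormedSpace ℝ X] {I : Type*}
    {L : ℝ} (hL : 0 < L) {x : I → X} {f : I → (X →L[ℝ] ℝ)}
    (hdiag : ∀ i, f i (x i) = 1) (hoff : ∀ i j, i ≠ j → f i (x j) = 0)
    (hnorm : ∀ i, ‖f i‖ ≤ L) {S T : Set I} {i : I} (hiS : i ∈ S) (hiT : i ∉ T) :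
    ENNReal.ofReal (1 / L) ≤
      hausdorffEDist (closure (convexHull ℝ (x '' S))) (closure (convexHull ℝ (x '' T))) := by
  have hT : x '' T ⊆ ((f i).ker : Set X) := by
    rintro _ ⟨j, hjT, rfl⟩
    exact hoff i j (ne_of_mem_of_not_mem hjT hiT).symm
  have hxi : x i ∈ closure (convexHull ℝ (x '' S)) :=
    subset_closure (subset_convexHull ℝ _ (Set.mem_image_of_mem x hiS))
  calc ENNReal.ofReal (1 / L) = ENNReal.ofReal (|f i (x i)| / L) := by
        rw [hdiag, abs_one]
    _ ≤ infEDist (x i) (closure (convexHull ℝ (x '' T))) :=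
        ofReal_abs_div_le_infEDist_of_subset_ker (f i) hL (hnorm i) (x i)
          (closure_convexHull_subset_ker (f i) hT)
    _ ≤ _ := infEDist_le_hausdorffEDist_of_mem hxi

theorem hausdorffEdist_ge_of_biorthogonal_general
    {X : Type*} [NormedAddCommGroup X] [NormedSpace ℝ X] {I : Type*}
    (L : ℝ) (hL : 0 < L) (x : I → X) (f : I → (X →L[ℝ] ℝ))
    (hdiag : ∀ i, f i (x i) = 1)
    (hoff : ∀ i j, i ≠ j → f i (x j) = 0)
    (hnorm : ∀ i, ‖f i‖ ≤ L)
    (A B : Set I) (hAB : A ≠ B) :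
    ENNReal.ofReal (1 / L) ≤
      EMetric.hausdorffEdist (closure (convexHull ℝ (x '' A)))
        (closure (convexHull ℝ (x '' B))) := by
  obtain ⟨i, ⟨hiA, hiB⟩ | ⟨hiB, hiA⟩⟩ := Set.symmDiff_nonempty.2 hAB
  · exact ofReal_one_div_le_hausdorffEDist_of_mem_of_notMem hL hdiag hoff hnorm hiA hiB
  · exact (ofReal_one_div_le_hausdorffEDist_of_mem_of_notMem hL hdiag hoff hnorm hiB hiA).trans_eq
      hausdorffEDist_comm

/-- Let `{(x_i, f_i)}_{i ∈ I}` be a biorthogonal family in `X × X*` with `‖f_i‖ ≤ L`.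
Then the closed convex hulls `C_A = cconv {x_i : i ∈ A}` of distinct nonempty index sets
`A, B ⊆ I` satisfy `d_H(C_A, C_B) ≥ 1/L`. -/
theorem hausdorffEdist_ge_of_biorthogonal
    {X : Type*} [NormedAddCommGroup X] [NormedSpace ℝ X] {I : Type*}
    (L : ℝ) (hL : 0 < L) (x : I → X) (f : I → (X →L[ℝ] ℝ))
    (hdiag : ∀ i, f i (x i) = 1)
    (hoff : ∀ i j, i ≠ j → f i (x j) = 0)
    (hnorm : ∀ i, ‖f i‖ ≤ L)
    (A B : Set I) (hA : A.Nonempty) (hB : B.Nonempty) (hAB : A ≠ B) :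
    ENNReal.ofReal (1 / L) ≤
      EMetric.hausdorffEdist (closure (convexHull ℝ (x '' A)))
        (closure (convexHull ℝ (x '' B))) :=
  hausdorffEdist_ge_of_biorthogonal_general L hL x f hdiag hoff hnorm A B hAB
end

section
/- Let X be a Banach space and let f be a continuous linear functional on X with ‖f‖ = 1. Then: (1) for all a, b ∈ ℝ, d_H(f⁻¹((−∞,a]), f⁻¹((−∞,b])) = |a − b|; (2) every nonempty closed convex subset C ⊆ X with d_H(C, f⁻¹((−∞,a])) < ∞ for some a ∈ ℝ is itself of the form C = f⁻¹((−∞,b]) for some b ∈ ℝ. Consequently, the metric component of the half-space f⁻¹((−∞,a]) in Conv_H(X) is isometric to ℝ. -/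
/-- `ConvH X` is the space of all nonempty closed convex subsets of `X`, endowed with the
Hausdorff extended metric (inherited from the extended metric on closed subsets). -/
abbrev ConvH (X : Type*) [NormedAddCommGroup X] [NormedSpace ℝ X] :=
  {C : TopologicalSpace.Closeds X // (C : Set X).Nonempty ∧ Convex ℝ (C : Set X)}

/-!
The distance from `x` to `{f ≤ b}` is `max (f x - b) 0 / ‖f‖`, which gives the Hausdorff
distance between parallel half-spaces. If a closed convex `C` is at finite distance from
`{f ≤ a}`, then `f` is bounded above on `C`, say with supremum `b`, and `C ⊆ {f ≤ b}`.
A functional separating a point of `{f ≤ b} \ C` from `C` is bounded above on `C`, hence on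
`{f ≤ a}`, so it is `c • f` with `c ≥ 0`; but `c • f` has the same supremum `c * b` on `C` and on
`{f ≤ b}`, so it separates nothing. Thus the component of `{f ≤ a}` consists of the half-spaces
`{f ≤ b}`, and `b ↦ {f ≤ b}` is an isometry from `ℝ` onto it.
-/

open Metric Set TopologicalSpace

namespace LinearMap

variable {V : Type*} [AddCommGroup V] [Module ℝ V]

theorem exists_nonneg_smul_of_apply_nonpos_imp {f g : V →ₗ[ℝ] ℝ}
    (h : ∀ z, f z ≤ 0 → g z ≤ 0) : ∃ c : ℝ, 0 ≤ c ∧ g = c • f := by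
  have hker : ∀ z, f z = 0 → g z = 0 := fun z hz =>
    le_antisymm (h z hz.le) (by simpa using h (-z) (by simp [hz]))
  by_cases hf : f = 0
  · exact ⟨0, le_rfl, by ext z; simp [hker z (by simp [hf])]⟩
  obtain ⟨e, he⟩ := surjective_of_ne_zero hf 1
  refine ⟨g e, by simpa using h (-e) (by simp [he]), ?_⟩
  ext z
  have hz : g (z - f z • e) = 0 := hker _ (by simp [he])
  simp only [map_sub, map_smul, smul_eq_mul, sub_eq_zero] at hz
  simp [hz, mul_comm]

theorem apply_nonpos_of_bddAbove_image_halfSpace {f g : V →ₗ[ℝ] ℝ} {a : ℝ}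
    (hH : {x | f x ≤ a}.Nonempty) (hg : BddAbove (g '' {x | f x ≤ a})) {z : V} (hz : f z ≤ 0) :
    g z ≤ 0 := by
  obtain ⟨x, hx⟩ := hH
  obtain ⟨M, hM⟩ := hg
  by_contra! hgz
  set t := (|M - g x| + 1) / g z
  have hray : x + t • z ∈ {x | f x ≤ a} := by
    have : t * f z ≤ 0 := mul_nonpos_of_nonneg_of_nonpos (div_nonneg (by positivity) hgz.le) hz
    simp only [mem_ofPred_eq, map_add, map_smul, smul_eq_mul]
    linarith [show f x ≤ a from hx]
  have hgt : g (x + t • z) = g x + |M - g x| + 1 := by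
    simp [t, div_mul_cancel₀ _ hgz.ne', add_assoc]
  linarith [hM (mem_image_of_mem g hray), le_abs_self (M - g x)]

end LinearMap

namespace ContinuousLinearMap

variable {X : Type*} [NormedAddCommGroup X] [NormedSpace ℝ X]

theorem surjective_of_ne_zero {f : X →L[ℝ] ℝ} (hf : f ≠ 0) : Function.Surjective f :=
  LinearMap.surjective_of_ne_zero (f := f.toLinearMap) (coe_injective.ne_iff.2 hf)

theorem exists_norm_lt_one_lt_apply (f : X →L[ℝ] ℝ) {r : ℝ} (hr : r < ‖f‖) :
    ∃ v : X, ‖v‖ < 1 ∧ r < f v := by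
  obtain ⟨v, hv, hrv⟩ := f.exists_lt_apply_of_lt_opNorm hr
  rcases le_total 0 (f v) with hfv | hfv
  · exact ⟨v, hv, by rwa [Real.norm_of_nonneg hfv] at hrv⟩
  · exact ⟨-v, by rwa [norm_neg], by rwa [Real.norm_of_nonpos hfv, ← map_neg] at hrv⟩

theorem infEDist_halfSpace {f : X →L[ℝ] ℝ} (hf : f ≠ 0) (b : ℝ) (x : X) :
    infEDist x {y | f y ≤ b} = ENNReal.ofReal ((f x - b) / ‖f‖) := by
  have hf' : 0 < ‖f‖ := norm_pos_iff.2 hf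
  refine le_antisymm ?_ (le_infEDist.2 fun y hy => ?_)
  · rcases le_or_gt (f x) b with hxb | hbx
    · simp [infEDist_zero_of_mem (show x ∈ {y | f y ≤ b} from hxb)]
    refine le_of_forall_gt fun t' ht' => ?_
    obtain ⟨t, -, hdt, htt⟩ := ENNReal.lt_iff_exists_real_btwn.1 ht'
    obtain ⟨hdt, ht⟩ := ENNReal.ofReal_lt_ofReal_iff'.1 hdt
    obtain ⟨v, hv, hfv⟩ := f.exists_norm_lt_one_lt_apply
      (show (f x - b) / t < ‖f‖ by rwa [div_lt_iff₀ ht, mul_comm, ← div_lt_iff₀ hf'])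
    have hd : 0 < f x - b := sub_pos.2 hbx
    have hfv0 : 0 < f v := lt_trans (by positivity) hfv
    refine lt_of_le_of_lt (infEDist_le_edist_of_mem (y := x - ((f x - b) / f v) • v) ?_) ?_
    · simp [div_mul_cancel₀ _ hfv0.ne']
    · rw [edist_dist, dist_eq_norm, sub_sub_cancel, norm_smul, Real.norm_of_nonneg (by positivity)]
      refine lt_of_le_of_lt (ENNReal.ofReal_le_ofReal ?_) htt
      calc (f x - b) / f v * ‖v‖ ≤ (f x - b) / f v := mul_le_of_le_one_right (by positivity) hv.le
        _ ≤ t := ((div_lt_comm₀ ht hfv0).1 hfv).le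
  · rw [edist_dist, dist_eq_norm]
    refine ENNReal.ofReal_le_ofReal ((div_le_iff₀' hf').2 ?_)
    calc f x - b ≤ f (x - y) := by rw [map_sub]; linarith [show f y ≤ b from hy]
      _ ≤ ‖f (x - y)‖ := Real.le_norm_self _
      _ ≤ ‖f‖ * ‖x - y‖ := f.le_opNorm _

theorem hausdorffEDist_halfSpace {f : X →L[ℝ] ℝ} (hf : f ≠ 0) (a b : ℝ) :
    hausdorffEDist {x | f x ≤ a} {x | f x ≤ b} = ENNReal.ofReal (|a - b| / ‖f‖) := by
  have hbound : ∀ a b : ℝ, ∀ x ∈ {x | f x ≤ a},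
      infEDist x {y | f y ≤ b} ≤ ENNReal.ofReal (|a - b| / ‖f‖) := fun a b x hx => by
    rw [infEDist_halfSpace hf]
    gcongr
    linarith [show f x ≤ a from hx, le_abs_self (a - b)]
  have hlower : ∀ a b : ℝ,
      ENNReal.ofReal ((a - b) / ‖f‖) ≤ hausdorffEDist {x | f x ≤ a} {x | f x ≤ b} := fun a b => by
    obtain ⟨x, hx⟩ := surjective_of_ne_zero hf a
    have := infEDist_le_hausdorffEDist_of_mem (t := {y | f y ≤ b})
      (show x ∈ {y | f y ≤ a} from hx.le)
    rwa [infEDist_halfSpace hf, hx] at this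
  refine le_antisymm (hausdorffEDist_le_of_infEDist (hbound a b) ?_) ?_
  · simpa only [abs_sub_comm] using hbound b a
  · rcases abs_choice (a - b) with h | h <;> rw [h]
    · exact hlower a b
    · rw [neg_sub, hausdorffEDist_comm]
      exact hlower b a

theorem bddAbove_image_of_hausdorffEDist_ne_top (g : X →L[ℝ] ℝ) {s t : Set X}
    (hst : hausdorffEDist s t ≠ ⊤) (ht : BddAbove (g '' t)) : BddAbove (g '' s) := by
  obtain ⟨M, hM⟩ := ht
  refine ⟨M + ‖g‖ * (hausdorffDist s t + 1), ?_⟩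
  rintro _ ⟨x, hx, rfl⟩
  obtain ⟨y, hy, hxy⟩ := exists_dist_lt_of_hausdorffDist_lt hx (lt_add_one _) hst
  have hgxy : g (x - y) ≤ ‖g‖ * (hausdorffDist s t + 1) := calc
    g (x - y) ≤ ‖g (x - y)‖ := Real.le_norm_self _
    _ ≤ ‖g‖ * ‖x - y‖ := g.le_opNorm _
    _ ≤ ‖g‖ * (hausdorffDist s t + 1) := by rw [← dist_eq_norm]; gcongr
  rw [map_sub] at hgxy
  linarith [hM (mem_image_of_mem g hy)]

theorem eq_setOf_le_sSup_of_hausdorffEDist_ne_top (f : X →L[ℝ] ℝ) {C : Set X} {a : ℝ}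
    (hne : C.Nonempty) (hcl : IsClosed C) (hcv : Convex ℝ C)
    (hC : hausdorffEDist C {x | f x ≤ a} ≠ ⊤) : C = {x | f x ≤ sSup (f '' C)} := by
  have hbdd : BddAbove (f '' C) :=
    f.bddAbove_image_of_hausdorffEDist_ne_top hC ⟨a, by rintro _ ⟨x, hx, rfl⟩; exact hx⟩
  refine Subset.antisymm (fun x hx => le_csSup hbdd (mem_image_of_mem f hx)) fun y hy => ?_
  by_contra hyC
  obtain ⟨g, u, hgC, hgy⟩ := geometric_hahn_banach_closed_point hcv hcl hyC
  have hgH : BddAbove (g '' {x | f x ≤ a}) :=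
    g.bddAbove_image_of_hausdorffEDist_ne_top (by rwa [hausdorffEDist_comm])
      ⟨u, by rintro _ ⟨x, hx, rfl⟩; exact (hgC x hx).le⟩
  obtain ⟨c, hc, hgf⟩ := LinearMap.exists_nonneg_smul_of_apply_nonpos_imp
    (f := f.toLinearMap) (g := g.toLinearMap) fun z hz =>
      LinearMap.apply_nonpos_of_bddAbove_image_halfSpace (nonempty_of_hausdorffEDist_ne_top hne hC)
        hgH hz
  have hg : ∀ x, g x = c * f x := fun x => LinearMap.congr_fun hgf x
  obtain ⟨w, hw⟩ := hne
  rcases hc.eq_or_lt with rfl | hc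
  · linarith [hgC w hw, hg w, hg y]
  have hsup : sSup (f '' C) ≤ u / c := csSup_le ⟨f w, mem_image_of_mem f hw⟩ <| by
    rintro _ ⟨x, hx, rfl⟩
    rw [le_div_iff₀' hc, ← hg]
    exact (hgC x hx).le
  have : u / c < f y := by rwa [div_lt_iff₀' hc, ← hg]
  linarith [show f y ≤ sSup (f '' C) from hy]

def halfSpaceConvH (f : X →L[ℝ] ℝ) (hf : f ≠ 0) (b : ℝ) : ConvH X :=
  ⟨⟨{x | f x ≤ b}, isClosed_le f.continuous continuous_const⟩,
    (surjective_of_ne_zero hf b).imp fun _ h => h.le, convex_halfSpace_le f.toLinearMap.isLinear b⟩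

theorem edist_halfSpaceConvH {f : X →L[ℝ] ℝ} (hf : f ≠ 0) (a b : ℝ) :
    edist (f.halfSpaceConvH hf a) (f.halfSpaceConvH hf b) = ENNReal.ofReal (|a - b| / ‖f‖) :=
  hausdorffEDist_halfSpace hf a b

theorem exists_isometry_bijective_of_eq_halfSpace {f : X →L[ℝ] ℝ} (hf : ‖f‖ = 1) {a : ℝ}
    {C₀ : ConvH X} (hC₀ : ((C₀ : Closeds X) : Set X) = {x | f x ≤ a}) :
    ∃ Φ : {C : ConvH X // edist C C₀ < ⊤} → ℝ, Isometry Φ ∧ Function.Bijective Φ := by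
  have hf0 : f ≠ 0 := norm_ne_zero_iff.1 (by simp [hf])
  obtain rfl : C₀ = f.halfSpaceConvH hf0 a := Subtype.ext (Closeds.ext hC₀)
  let ψ : ℝ → {C : ConvH X // edist C (f.halfSpaceConvH hf0 a) < ⊤} := fun b =>
    ⟨f.halfSpaceConvH hf0 b, by rw [edist_halfSpaceConvH]; exact ENNReal.ofReal_lt_top⟩
  have hψ : Isometry ψ := fun b b' => by
    rw [Subtype.edist_eq, edist_halfSpaceConvH, hf, div_one, edist_dist, Real.dist_eq]
  have hψ_sSup : ∀ C, ψ (sSup (f '' C.1.1)) = C := fun ⟨⟨C, hne, hcv⟩, hC⟩ =>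
    Subtype.ext <| Subtype.ext <| Closeds.ext <| .symm <|
      f.eq_setOf_le_sSup_of_hausdorffEDist_ne_top hne C.isClosed hcv hC.ne
  let e := IsometryEquiv.mk' ψ (fun C => sSup (f '' C.1.1)) hψ_sSup hψ
  exact ⟨e.symm, e.symm.isometry, e.symm.bijective⟩

end ContinuousLinearMap

theorem halfSpace_component_isometric_real_general
    {X : Type*} [NormedAddCommGroup X] [NormedSpace ℝ X]
    (f : X →L[ℝ] ℝ) (hf : ‖f‖ = 1) :
    (∀ a b : ℝ, EMetric.hausdorffEdist {x : X | f x ≤ a} {x : X | f x ≤ b} =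
      ENNReal.ofReal |a - b|) ∧
    (∀ (C : Set X) (a : ℝ), C.Nonempty → IsClosed C → Convex ℝ C →
      EMetric.hausdorffEdist C {x : X | f x ≤ a} < ⊤ → ∃ b : ℝ, C = {x : X | f x ≤ b}) ∧
    (∀ (a : ℝ) (C₀ : ConvH X),
      ((C₀ : TopologicalSpace.Closeds X) : Set X) = {x : X | f x ≤ a} →
      ∃ Φ : {C : ConvH X // edist C C₀ < ⊤} → ℝ,
        Isometry Φ ∧ Function.Bijective Φ) := by
  have hf0 : f ≠ 0 := norm_ne_zero_iff.1 (by simp [hf])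
  refine ⟨fun a b => ?_, fun C a hne hcl hcv hC => ?_, fun a C₀ hC₀ => ?_⟩
  · exact (f.hausdorffEDist_halfSpace hf0 a b).trans (by rw [hf, div_one])
  · exact ⟨_, f.eq_setOf_le_sSup_of_hausdorffEDist_ne_top hne hcl hcv hC.ne⟩
  · exact f.exists_isometry_bijective_of_eq_halfSpace hf hC₀

/-- For a norm-one continuous linear functional `f` on a Banach space `X`:
(1) `d_H(f⁻¹(-∞,a], f⁻¹(-∞,b]) = |a - b|`;
(2) every nonempty closed convex set at finite Hausdorff distance from a half-space
`f⁻¹(-∞,a]` is itself a half-space `f⁻¹(-∞,b]`;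
consequently (3) the metric component of the half-space `f⁻¹(-∞,a]` in `Conv_H(X)` is
isometric to `ℝ`. -/
theorem halfSpace_component_isometric_real
    {X : Type*} [NormedAddCommGroup X] [NormedSpace ℝ X] [CompleteSpace X]
    (f : X →L[ℝ] ℝ) (hf : ‖f‖ = 1) :
    (∀ a b : ℝ, EMetric.hausdorffEdist {x : X | f x ≤ a} {x : X | f x ≤ b} =
      ENNReal.ofReal |a - b|) ∧
    (∀ (C : Set X) (a : ℝ), C.Nonempty → IsClosed C → Convex ℝ C →
      EMetric.hausdorffEdist C {x : X | f x ≤ a} < ⊤ → ∃ b : ℝ, C = {x : X | f x ≤ b}) ∧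
    (∀ (a : ℝ) (C₀ : ConvH X),
      ((C₀ : TopologicalSpace.Closeds X) : Set X) = {x : X | f x ≤ a} →
      ∃ Φ : {C : ConvH X // edist C C₀ < ⊤} → ℝ,
        Isometry Φ ∧ Function.Bijective Φ) :=
  halfSpace_component_isometric_real_general f hf
end

section
/- Let X be a Banach space and let f be a nonzero continuous linear functional on X with kernel Z = f⁻¹(0). Then every nonempty closed convex subset C ⊆ X with d_H(C, Z) < ∞ is of the form C = f⁻¹([a,b]) for some real numbers a ≤ b. Consequently, the metric component of the codimension-1 subspace Z in Conv_H(X) consists exactly of the preimages under f of nonempty compact intervals of ℝ. -/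
/-!
A closed convex set `C` at finite Hausdorff distance `R` from a linear subspace `Z` is invariant
under translation by `Z`: given `c ∈ C` and `z ∈ Z`, for every `t > 0` some `y ∈ C` lies within
`R` of `t • z`, and the points `(1 - t⁻¹) • c + t⁻¹ • y` of `C` tend to `c + z` as `t → ∞`.
For `Z = ker f` this gives `C = f⁻¹(f(C))`; then `f(C)` is closed (it is the preimage of `C`
under the section `s ↦ s • u` of `f`, where `f u = 1`), bounded and convex, hence a compact
interval. Conversely, moving points along `u` shows `d_H(f⁻¹ s, f⁻¹ t) ≤ ‖u‖ d_H(s, t)`.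
-/

open Set Metric Filter Topology Bornology

theorem LipschitzWith.infEDist_image_le {α β : Type*} [PseudoEMetricSpace α]
    [PseudoEMetricSpace β] {K : NNReal} {g : α → β} (hg : LipschitzWith K g) (hK : K ≠ 0)
    (x : α) (t : Set α) : infEDist (g x) (g '' t) ≤ K * infEDist x t := by
  simp only [infEDist, iInf_image]
  rw [ENNReal.mul_iInf_of_ne (by simpa using hK) ENNReal.coe_ne_top]
  refine iInf_mono fun y ↦ ?_
  rw [ENNReal.mul_iInf_of_ne (by simpa using hK) ENNReal.coe_ne_top]
  exact iInf_mono fun _ ↦ hg x y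

theorem preimage_image_eq_of_forall_add_mem {M N F : Type*} [AddGroup M] [AddGroup N]
    [FunLike F M N] [AddMonoidHomClass F M N] (f : F) {C : Set M}
    (h : ∀ c ∈ C, ∀ z, f z = 0 → c + z ∈ C) : f ⁻¹' (f '' C) = C := by
  refine (subset_preimage_image f C).antisymm' ?_
  rintro x ⟨c, hc, hcx⟩
  simpa using h c hc (-c + x) (by simp [hcx])

theorem isBounded_image_of_hausdorffEDist_ker_ne_top {𝕜 E F : Type*} [NontriviallyNormedField 𝕜]
    [NormedAddCommGroup E] [NormedSpace 𝕜 E] [NormedAddCommGroup F] [NormedSpace 𝕜 F]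
    (f : E →L[𝕜] F) {C : Set E} (hd : hausdorffEDist C (f ⁻¹' {0}) ≠ ⊤) :
    IsBounded (f '' C) := by
  refine isBounded_iff_forall_norm_le.mpr ⟨‖f‖ * (hausdorffDist C (f ⁻¹' {0}) + 1), ?_⟩
  rintro _ ⟨c, hc, rfl⟩
  obtain ⟨z, hz, hcz⟩ := exists_dist_lt_of_hausdorffDist_lt hc (lt_add_one _) hd
  calc ‖f c‖ = ‖f (c - z)‖ := by rw [map_sub, show f z = 0 from hz, sub_zero]
    _ ≤ ‖f‖ * ‖c - z‖ := f.le_opNorm _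
    _ ≤ _ := by rw [← dist_eq_norm]; gcongr

section NormedSpace

variable {E : Type*} [NormedAddCommGroup E] [NormedSpace ℝ E] {C : Set E}

theorem Convex.add_mem_of_forall_smul_dist_le (hconv : Convex ℝ C) (hcl : IsClosed C)
    {c v : E} (hc : c ∈ C) {R : ℝ} (hR : ∀ t : ℝ, ∃ y ∈ C, dist (t • v) y ≤ R) :
    c + v ∈ C := by
  choose y hyC hy using hR
  set p : ℝ → E := fun t ↦ (1 - t⁻¹) • c + t⁻¹ • y t
  have hp_mem : ∀ᶠ t in atTop, p t ∈ C := by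
    filter_upwards [eventually_ge_atTop 1] with t ht
    have : t⁻¹ ≤ 1 := inv_le_one_of_one_le₀ ht
    exact hconv hc (hyC t) (by linarith) (by positivity) (by ring)
  have hp_dist : ∀ᶠ t in atTop, ‖p t - (c + v)‖ ≤ (‖c‖ + R) * t⁻¹ := by
    filter_upwards [eventually_gt_atTop 0] with t ht
    have hpt : p t - (c + v) = t⁻¹ • (y t - t • v - c) := by
      simp only [p, smul_sub, smul_smul, inv_mul_cancel₀ ht.ne', one_smul, sub_smul]
      abel
    rw [hpt, norm_smul, Real.norm_of_nonneg (inv_nonneg.mpr ht.le), mul_comm]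
    gcongr
    calc ‖y t - t • v - c‖ ≤ ‖y t - t • v‖ + ‖c‖ := norm_sub_le _ _
      _ ≤ R + ‖c‖ := by rw [← dist_eq_norm, dist_comm]; gcongr; exact hy t
      _ = ‖c‖ + R := add_comm _ _
  have hp_lim : Tendsto p atTop (𝓝 (c + v)) := by
    rw [tendsto_iff_norm_sub_tendsto_zero]
    refine squeeze_zero' (Eventually.of_forall fun _ ↦ norm_nonneg _) hp_dist ?_
    simpa using tendsto_inv_atTop_zero.const_mul (‖c‖ + R)
  exact hcl.mem_of_tendsto hp_lim hp_mem

theorem Convex.add_mem_of_hausdorffEDist_ne_top_s19 {Z : Submodule ℝ E} (hconv : Convex ℝ C)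
    (hcl : IsClosed C) (hd : hausdorffEDist C Z ≠ ⊤) {c z : E} (hc : c ∈ C) (hz : z ∈ Z) :
    c + z ∈ C := by
  refine hconv.add_mem_of_forall_smul_dist_le hcl hc (R := hausdorffDist (Z : Set E) C + 1)
    fun t ↦ ?_
  obtain ⟨y, hy, hty⟩ := exists_dist_lt_of_hausdorffDist_lt (Z.smul_mem t hz) (lt_add_one _)
    (by rwa [hausdorffEDist_comm])
  exact ⟨y, hy, hty.le⟩

theorem ContinuousLinearMap.exists_apply_eq_one {f : E →L[ℝ] ℝ} (hf : f ≠ 0) : ∃ u, f u = 1 :=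
  LinearMap.surjective (f := (f : E →ₗ[ℝ] ℝ)) (ContinuousLinearMap.coe_injective.ne hf) 1

theorem infEDist_preimage_le (f : E →L[ℝ] ℝ) {u : E} (hu : f u = 1) (x : E) (t : Set ℝ) :
    infEDist x (f ⁻¹' t) ≤ ‖u‖₊ * infEDist (f x) t := by
  set g : ℝ → E := fun s ↦ x + (s - f x) • u
  have hg : LipschitzWith ‖u‖₊ g := by
    refine LipschitzWith.of_dist_le_mul fun s s' ↦ ?_
    simp only [g, dist_eq_norm, add_sub_add_left_eq_sub, ← sub_smul, norm_smul, Real.norm_eq_abs]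
    rw [mul_comm]
    simp
  have hu0 : ‖u‖₊ ≠ 0 := nnnorm_ne_zero_iff.mpr fun h ↦ by simp [h] at hu
  have hgt : g '' t ⊆ f ⁻¹' t := by
    rintro _ ⟨s, hs, rfl⟩
    simpa [g, hu] using hs
  calc infEDist x (f ⁻¹' t) ≤ infEDist x (g '' t) := infEDist_anti hgt
    _ = infEDist (g (f x)) (g '' t) := by simp [g]
    _ ≤ ‖u‖₊ * infEDist (f x) t := hg.infEDist_image_le hu0 _ _

theorem hausdorffEDist_preimage_le (f : E →L[ℝ] ℝ) {u : E} (hu : f u = 1) (s t : Set ℝ) :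
    hausdorffEDist (f ⁻¹' s) (f ⁻¹' t) ≤ ‖u‖₊ * hausdorffEDist s t := by
  refine hausdorffEDist_le_of_infEDist (fun x hx ↦ ?_) (fun x hx ↦ ?_)
  · refine (infEDist_preimage_le f hu x t).trans ?_
    gcongr
    exact infEDist_le_hausdorffEDist_of_mem hx
  · refine (infEDist_preimage_le f hu x s).trans ?_
    rw [hausdorffEDist_comm]
    gcongr
    exact infEDist_le_hausdorffEDist_of_mem hx

theorem Convex.eq_preimage_Icc_of_hausdorffEDist_ker_ne_top {f : E →L[ℝ] ℝ} (hf : f ≠ 0)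
    (hne : C.Nonempty) (hcl : IsClosed C) (hconv : Convex ℝ C)
    (hd : hausdorffEDist C (f ⁻¹' {0}) ≠ ⊤) : ∃ a b : ℝ, a ≤ b ∧ C = f ⁻¹' Icc a b := by
  obtain ⟨u, hu⟩ := f.exists_apply_eq_one hf
  set J := f '' C
  have hsat : f ⁻¹' J = C := preimage_image_eq_of_forall_add_mem f fun c hc z hz ↦
    hconv.add_mem_of_hausdorffEDist_ne_top_s19 (Z := LinearMap.ker (f : E →ₗ[ℝ] ℝ)) hcl hd hc hz
  have hJcl : IsClosed J := by
    have hsec : (· • u) ⁻¹' (f ⁻¹' J) = J :=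
      Function.LeftInverse.preimage_preimage (fun s ↦ by simp [hu]) J
    rw [← hsec, hsat]
    exact hcl.preimage (continuous_id.smul continuous_const)
  have hJcpt : IsCompact J :=
    isCompact_of_isClosed_isBounded hJcl (isBounded_image_of_hausdorffEDist_ker_ne_top f hd)
  have hJconn : IsConnected J :=
    ⟨hne.image f, hconv.isPreconnected.image f f.continuous.continuousOn⟩
  refine ⟨sInf J, sSup J, csInf_le_csSup hJconn.nonempty hJcpt.bddBelow hJcpt.bddAbove, ?_⟩
  rw [← eq_Icc_of_connected_compact hJconn hJcpt, hsat]

end NormedSpace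

theorem component_of_codim_one_subspace_general
    {X : Type*} [NormedAddCommGroup X] [NormedSpace ℝ X]
    (f : X →L[ℝ] ℝ) (hf : f ≠ 0) :
    (∀ C : Set X, C.Nonempty → IsClosed C → Convex ℝ C →
      EMetric.hausdorffEdist C (f ⁻¹' {0}) < ⊤ →
      ∃ a b : ℝ, a ≤ b ∧ C = f ⁻¹' Set.Icc a b) ∧
    {C : Set X | C.Nonempty ∧ IsClosed C ∧ Convex ℝ C ∧
        EMetric.hausdorffEdist C (f ⁻¹' {0}) < ⊤} =
      {C : Set X | ∃ a b : ℝ, a ≤ b ∧ C = f ⁻¹' Set.Icc a b} := by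
  have hcomp (C : Set X) (hne : C.Nonempty) (hcl : IsClosed C) (hconv : Convex ℝ C)
      (hd : hausdorffEDist C (f ⁻¹' {0}) < ⊤) : ∃ a b : ℝ, a ≤ b ∧ C = f ⁻¹' Icc a b :=
    hconv.eq_preimage_Icc_of_hausdorffEDist_ker_ne_top hf hne hcl hd.ne
  refine ⟨hcomp, Set.ext fun C ↦ ⟨fun ⟨hne, hcl, hconv, hd⟩ ↦ hcomp C hne hcl hconv hd, ?_⟩⟩
  rintro ⟨a, b, hab, rfl⟩
  obtain ⟨u, hu⟩ := f.exists_apply_eq_one hf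
  refine ⟨⟨a • u, by simp [hu, hab]⟩, isClosed_Icc.preimage f.continuous,
    (convex_Icc a b).linear_preimage (f : X →ₗ[ℝ] ℝ), ?_⟩
  have hfin : hausdorffEDist (Icc a b) {0} ≠ ⊤ :=
    hausdorffEDist_ne_top_of_nonempty_of_bounded (nonempty_Icc.mpr hab) (singleton_nonempty 0)
      (isBounded_Icc a b) isBounded_singleton
  exact (hausdorffEDist_preimage_le f hu _ _).trans_lt
    (ENNReal.mul_lt_top ENNReal.coe_lt_top hfin.lt_top)

/-- For a nonzero continuous linear functional `f` on a Banach space `X` with kernel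
`Z = f⁻¹(0)`: every nonempty closed convex set at finite Hausdorff distance from `Z` is of
the form `f⁻¹([a,b])` with `a ≤ b`; consequently, the metric component of `Z` in
`Conv_H(X)` consists exactly of the preimages under `f` of nonempty compact intervals. -/
theorem component_of_codim_one_subspace
    {X : Type*} [NormedAddCommGroup X] [NormedSpace ℝ X] [CompleteSpace X]
    (f : X →L[ℝ] ℝ) (hf : f ≠ 0) :
    (∀ C : Set X, C.Nonempty → IsClosed C → Convex ℝ C →
      EMetric.hausdorffEdist C (f ⁻¹' {0}) < ⊤ →
      ∃ a b : ℝ, a ≤ b ∧ C = f ⁻¹' Set.Icc a b) ∧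
    {C : Set X | C.Nonempty ∧ IsClosed C ∧ Convex ℝ C ∧
        EMetric.hausdorffEdist C (f ⁻¹' {0}) < ⊤} =
      {C : Set X | ∃ a b : ℝ, a ≤ b ∧ C = f ⁻¹' Set.Icc a b} :=
  component_of_codim_one_subspace_general f hf
end
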